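/- Let X be a real vector space with a quasi-norm ‖·‖ with modulus of concavity α ≥ 1, complete with respect to ‖·‖, equipped with a semi-normalized Markushevich basis (e_i, e*_i) with c := sup_i (1+‖e_i‖)(1+‖e*_i‖) < ∞. Let t ∈ (0,1] and n = (n_k) a strictly increasing sequence of positive integers. Suppose there is C₁ > 0 such that ‖P_A(x)‖ ≤ C₁·‖x‖ for every x ∈ X and every t-greedy set A for x with |A| ∈ {n_k : k ∈ ℕ}. Then for every x ∈ X and every sequence (A_k)_{k∈ℕ} where each A_k is a t-greedy set for x of cardinality n_k, one has ‖x − P_{A_k}(x)‖ → 0 as k → ∞. -/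

import Mathlib

/-!
Density of the span forces the coordinates `e*_j(y)` to tend to `0`, so every `y` has greedy
sets of every size, and outside a large greedy set only small coordinates remain.

First, every `y` is close to some `P_B y`: take `z` in the span with support `B₀` close to `y`,
and a greedy set `G` of `w = y - z` of some size `n_m`, large enough that `w` has only small
coordinates off `G`; then `y - P_{B₀ ∪ G} y = (w - P_G w) - P_{B₀ \ G} w`.

Now fix `B` with `v = x - P_B x` small. If `A` is `t`-greedy for `x` of size `n_k` with `k`
large, the coordinates of `x` off `A` are small, and `G = (A \ B) ∪ E`, where `E` collects the
`#(A ∩ B)` largest coordinates of `v` off `A \ B`, is `t`-greedy for `v` and again of size `n_k`.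
Hence `x - P_A x = (v - P_G v) + P_E v + P_{B \ A} x`: the first term is at most
`α (1 + C₁) q v`, and the other two project onto at most `#B` coordinates, all of them small.
-/

open Finset

/-- Coordinate projection `P_A x = ∑_{i ∈ A} e*_i(x) • e_i`. -/
def qproj {X : Type*} [AddCommGroup X] [Module ℝ X]
    (e : ℕ → X) (f : ℕ → X →ₗ[ℝ] ℝ) (A : Finset ℕ) (x : X) : X :=
  ∑ i ∈ A, f i x • e i

/-- `A` is a `t`-greedy set for `x`:
`min_{i ∈ A} |e*_i(x)| ≥ t · sup_{j ∉ A} |e*_j(x)|`. -/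
def qGreedySet {X : Type*} [AddCommGroup X] [Module ℝ X]
    (f : ℕ → X →ₗ[ℝ] ℝ) (t : ℝ) (x : X) (A : Finset ℕ) : Prop :=
  ∀ i ∈ A, ∀ j ∉ A, t * |f j x| ≤ |f i x|

open Filter Topology

section QuasiSeminorm

variable {X : Type*} [AddCommGroup X] [Module ℝ X]

structure IsQuasiSeminorm (q : X → ℝ) (α : ℝ) : Prop where
  nonneg : ∀ x, 0 ≤ q x
  smul : ∀ (a : ℝ) (x : X), q (a • x) = |a| * q x
  add_le : ∀ x y, q (x + y) ≤ α * (q x + q y)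
  one_le : 1 ≤ α

namespace IsQuasiSeminorm

variable {q : X → ℝ} {α : ℝ}

theorem map_zero (hq : IsQuasiSeminorm q α) : q 0 = 0 := by
  simpa using hq.smul 0 0

theorem map_neg (hq : IsQuasiSeminorm q α) (x : X) : q (-x) = q x := by
  simpa using hq.smul (-1) x

theorem sub_le (hq : IsQuasiSeminorm q α) (x y : X) : q (x - y) ≤ α * (q x + q y) := by
  simpa [sub_eq_add_neg, hq.map_neg] using hq.add_le x (-y)

theorem sum_le (hq : IsQuasiSeminorm q α) {ι : Type*} (s : Finset ι) (g : ι → X) :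
    q (∑ i ∈ s, g i) ≤ α ^ #s * ∑ i ∈ s, q (g i) := by
  classical
  induction s using Finset.induction_on with
  | empty => simp [hq.map_zero]
  | insert a s ha ih =>
    have hα : 0 ≤ α := zero_le_one.trans hq.one_le
    have hga : q (g a) ≤ α ^ #s * q (g a) :=
      le_mul_of_one_le_left (hq.nonneg _) (one_le_pow₀ hq.one_le)
    rw [sum_insert ha, sum_insert ha, card_insert_of_notMem ha, pow_succ']
    calc q (g a + ∑ i ∈ s, g i) ≤ α * (q (g a) + q (∑ i ∈ s, g i)) := hq.add_le _ _
      _ ≤ α * (α ^ #s * q (g a) + α ^ #s * ∑ i ∈ s, q (g i)) := by gcongr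
      _ = α * α ^ #s * (q (g a) + ∑ i ∈ s, q (g i)) := by ring

end IsQuasiSeminorm

end QuasiSeminorm

section Projections

variable {X : Type*} [AddCommGroup X] [Module ℝ X] {e : ℕ → X} {f : ℕ → X →ₗ[ℝ] ℝ}

theorem qproj_add (s : Finset ℕ) (x y : X) :
    qproj e f s (x + y) = qproj e f s x + qproj e f s y := by
  simp only [qproj, map_add, add_smul, sum_add_distrib]

theorem qproj_sub (s : Finset ℕ) (x y : X) :
    qproj e f s (x - y) = qproj e f s x - qproj e f s y := by
  simp only [qproj, map_sub, sub_smul, sum_sub_distrib]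

theorem qproj_smul (s : Finset ℕ) (a : ℝ) (x : X) :
    qproj e f s (a • x) = a • qproj e f s x := by
  simp only [qproj, map_smul, smul_eq_mul, mul_smul, smul_sum]

theorem qproj_union {s t : Finset ℕ} (h : Disjoint s t) (x : X) :
    qproj e f (s ∪ t) x = qproj e f s x + qproj e f t x :=
  sum_union h

theorem qproj_union_sdiff (s t : Finset ℕ) (x : X) :
    qproj e f (s ∪ t) x = qproj e f s x + qproj e f (t \ s) x := by
  rw [← union_sdiff_self_eq_union, qproj_union disjoint_sdiff]

theorem qproj_congr {s : Finset ℕ} {x y : X} (h : ∀ i ∈ s, f i x = f i y) :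
    qproj e f s x = qproj e f s y :=
  sum_congr rfl fun i hi => by rw [h i hi]

theorem apply_qproj (hbio : ∀ k i, f k (e i) = if k = i then 1 else 0) (s : Finset ℕ)
    (x : X) (i : ℕ) : f i (qproj e f s x) = if i ∈ s then f i x else 0 := by
  simp [qproj, hbio]

theorem qproj_basis (hbio : ∀ k i, f k (e i) = if k = i then 1 else 0) (s : Finset ℕ) (i : ℕ) :
    qproj e f s (e i) = if i ∈ s then e i else 0 := by
  simp [qproj, hbio]

theorem exists_qproj_eq_self_of_mem_span (hbio : ∀ k i, f k (e i) = if k = i then 1 else 0)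
    {z : X} (hz : z ∈ Submodule.span ℝ (Set.range e)) :
    ∃ B : Finset ℕ, ∀ s, B ⊆ s → qproj e f s z = z := by
  induction hz using Submodule.span_induction with
  | mem x hx =>
    obtain ⟨i, rfl⟩ := hx
    exact ⟨{i}, fun s hs => by rw [qproj_basis hbio, if_pos (singleton_subset_iff.1 hs)]⟩
  | zero => exact ⟨∅, fun s _ => by simp [qproj]⟩
  | add x y _ _ hx hy =>
    obtain ⟨B₁, h₁⟩ := hx
    obtain ⟨B₂, h₂⟩ := hy
    exact ⟨B₁ ∪ B₂, fun s hs => by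
      rw [qproj_add, h₁ s (union_subset_left hs), h₂ s (union_subset_right hs)]⟩
  | smul a x _ hx =>
    obtain ⟨B, hB⟩ := hx
    exact ⟨B, fun s hs => by rw [qproj_smul, hB s hs]⟩

theorem tendsto_apply_cofinite (hbio : ∀ k i, f k (e i) = if k = i then 1 else 0)
    {q : X → ℝ} {K : ℝ} (hK : 0 ≤ K) (hf : ∀ i x, |f i x| ≤ K * q x)
    (hdense : ∀ x : X, ∀ ε : ℝ, 0 < ε → ∃ y ∈ Submodule.span ℝ (Set.range e), q (x - y) ≤ ε)
    (y : X) : Tendsto (fun j => f j y) cofinite (𝓝 0) := by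
  rw [Metric.tendsto_nhds]
  intro ε hε
  obtain ⟨δ, hδ, hKδ⟩ := exists_pos_mul_lt hε K
  obtain ⟨z, hz, hyz⟩ := hdense y δ hδ
  obtain ⟨B, hB⟩ := exists_qproj_eq_self_of_mem_span hbio hz
  refine eventually_cofinite.2 (B.finite_toSet.subset fun j hj => ?_)
  by_contra hjB
  have hfz : f j z = 0 := by
    rw [← hB B subset_rfl, apply_qproj hbio, if_neg (mod_cast hjB)]
  refine hj ?_
  calc dist (f j y) 0 = |f j (y - z)| := by simp [hfz]
    _ ≤ K * q (y - z) := hf j _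
    _ ≤ K * δ := by gcongr
    _ < ε := hKδ

end Projections

section VanishingAtInfinity

variable {ι : Type*} {a : ι → ℝ}

theorem exists_finset_abs_le_of_tendsto (ha : Tendsto a cofinite (𝓝 0)) {σ : ℝ} (hσ : 0 < σ) :
    ∃ S : Finset ι, ∀ j ∉ S, |a j| ≤ σ := by
  have hfin := eventually_cofinite.1 (ha.eventually (Metric.closedBall_mem_nhds 0 hσ))
  exact ⟨hfin.toFinset, fun j hj => by simpa using hj⟩

theorem exists_notMem_forall_abs_le [Infinite ι] (ha : Tendsto a cofinite (𝓝 0))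
    (F : Finset ι) : ∃ j ∉ F, ∀ i ∉ F, |a i| ≤ |a j| := by
  classical
  by_cases h : ∃ j₀ ∉ F, a j₀ ≠ 0
  · obtain ⟨j₀, hj₀F, hj₀⟩ := h
    obtain ⟨S, hS⟩ := exists_finset_abs_le_of_tendsto ha (abs_pos.2 hj₀)
    obtain ⟨j, hjT, hjmax⟩ := exists_max_image (insert j₀ (S \ F)) (fun i => |a i|)
      (insert_nonempty _ _)
    refine ⟨j, fun hjF => ?_, fun i hiF => ?_⟩
    · rcases mem_insert.1 hjT with rfl | hj
      exacts [hj₀F hjF, (mem_sdiff.1 hj).2 hjF]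
    · by_cases hiS : i ∈ S
      · exact hjmax i (mem_insert_of_mem (mem_sdiff.2 ⟨hiS, hiF⟩))
      · exact (hS i hiS).trans (hjmax j₀ (mem_insert_self _ _))
  · push Not at h
    obtain ⟨j, hj⟩ := Infinite.exists_notMem_finset F
    exact ⟨j, hj, fun i hi => by simp [h i hi]⟩

theorem exists_disjoint_card_eq_forall_abs_le [Infinite ι] [DecidableEq ι]
    (ha : Tendsto a cofinite (𝓝 0)) (F : Finset ι) (d : ℕ) :
    ∃ E : Finset ι, Disjoint E F ∧ #E = d ∧ ∀ i ∈ E, ∀ j ∉ F ∪ E, |a j| ≤ |a i| := by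
  induction d with
  | zero => exact ⟨∅, disjoint_empty_left _, card_empty, by simp⟩
  | succ d ih =>
    obtain ⟨E, hEF, hEd, hEdom⟩ := ih
    obtain ⟨j, hj, hjmax⟩ := exists_notMem_forall_abs_le ha (F ∪ E)
    rw [mem_union, not_or] at hj
    refine ⟨insert j E, disjoint_insert_left.2 ⟨hj.1, hEF⟩, by rw [card_insert_of_notMem hj.2, hEd],
      fun i hi k hk => ?_⟩
    rw [mem_union, mem_insert, not_or, not_or] at hk
    rcases mem_insert.1 hi with rfl | hi
    · exact hjmax k (by simp [hk.1, hk.2.2])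
    · exact hEdom i hi k (by simp [hk.1, hk.2.2])

end VanishingAtInfinity

section Greedy

variable {X : Type*} [AddCommGroup X] [Module ℝ X] {e : ℕ → X} {f : ℕ → X →ₗ[ℝ] ℝ}
  {t : ℝ} {x : X} {A : Finset ℕ}

theorem qGreedySet.union (ht1 : t ≤ 1) (hA : qGreedySet f t x A) {E : Finset ℕ}
    (hE : ∀ i ∈ E, ∀ j ∉ A ∪ E, |f j x| ≤ |f i x|) : qGreedySet f t x (A ∪ E) := by
  intro i hi j hj
  rcases mem_union.1 hi with hi | hi
  · exact hA i hi j fun hj' => hj (mem_union_left _ hj')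
  · exact (mul_le_of_le_one_left (abs_nonneg _) ht1).trans (hE i hi j hj)

theorem qGreedySet.sdiff_sub_qproj (hbio : ∀ k i, f k (e i) = if k = i then 1 else 0)
    (hA : qGreedySet f t x A) (B : Finset ℕ) :
    qGreedySet f t (x - qproj e f B x) (A \ B) := by
  intro i hi j hj
  rw [Finset.mem_sdiff] at hi hj
  simp only [map_sub, apply_qproj hbio, if_neg hi.2]
  by_cases hjB : j ∈ B
  · simp [hjB]
  · simpa [hjB] using hA i hi.1 j fun hjA => hj ⟨hjA, hjB⟩

theorem qGreedySet.abs_apply_le (ht : 0 < t) (hA : qGreedySet f t x A) {S : Finset ℕ}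
    {σ : ℝ} (hS : ∀ j ∉ S, |f j x| ≤ t * σ) (hcard : #S < #A) : ∀ j ∉ A, |f j x| ≤ σ := by
  obtain ⟨i, hiA, hiS⟩ := exists_mem_notMem_of_card_lt_card hcard
  exact fun j hj => le_of_mul_le_mul_left ((hA i hiA j hj).trans (hS i hiS)) ht

end Greedy

section Estimates

variable {X : Type*} [AddCommGroup X] [Module ℝ X] {q : X → ℝ} {α : ℝ}
  {e : ℕ → X} {f : ℕ → X →ₗ[ℝ] ℝ}

theorem IsQuasiSeminorm.qproj_le (hq : IsQuasiSeminorm q α) {c : ℝ} (hc : 0 ≤ c)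
    (he : ∀ i, q (e i) ≤ c) {s : Finset ℕ} {N : ℕ} (hs : #s ≤ N) {x : X} {σ : ℝ}
    (hσ : 0 ≤ σ) (hx : ∀ i ∈ s, |f i x| ≤ σ) :
    q (qproj e f s x) ≤ α ^ N * N * c * σ :=
  calc q (qproj e f s x) ≤ α ^ #s * ∑ i ∈ s, q (f i x • e i) := hq.sum_le _ _
    _ ≤ α ^ #s * ∑ _i ∈ s, σ * c := by
      have hα : 0 ≤ α := zero_le_one.trans hq.one_le
      gcongr with i hi
      rw [hq.smul]
      exact mul_le_mul (hx i hi) (he i) (hq.nonneg _) hσ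
    _ = α ^ #s * #s * c * σ := by rw [sum_const, nsmul_eq_mul]; ring
    _ ≤ α ^ N * N * c * σ := by
      have hα := hq.one_le
      gcongr

def GreedyProjBounded (q : X → ℝ) (e : ℕ → X) (f : ℕ → X →ₗ[ℝ] ℝ) (t : ℝ) (n : ℕ → ℕ)
    (C : ℝ) : Prop :=
  ∀ x A, qGreedySet f t x A → (∃ k, #A = n k) → q (qproj e f A x) ≤ C * q x

variable {t : ℝ} {n : ℕ → ℕ} {C : ℝ}

theorem GreedyProjBounded.sub_qproj_le (hC : GreedyProjBounded q e f t n C)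
    (hq : IsQuasiSeminorm q α) {w : X} {G : Finset ℕ} (hG : qGreedySet f t w G)
    (hGn : ∃ k, #G = n k) : q (w - qproj e f G w) ≤ α * (1 + C) * q w := by
  have hα : 0 ≤ α := zero_le_one.trans hq.one_le
  calc q (w - qproj e f G w) ≤ α * (q w + q (qproj e f G w)) := hq.sub_le _ _
    _ ≤ α * (q w + C * q w) := by gcongr; exact hC w G hG hGn
    _ = α * (1 + C) * q w := by ring

theorem GreedyProjBounded.sub_qproj_union_le (hC : GreedyProjBounded q e f t n C)
    (hq : IsQuasiSeminorm q α) {c : ℝ} (hc : 0 ≤ c) (he : ∀ i, q (e i) ≤ c) {y z : X}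
    {B G : Finset ℕ} (hz : qproj e f (B ∪ G) z = z) (hG : qGreedySet f t (y - z) G)
    (hGn : ∃ k, #G = n k) {σ : ℝ} (hσ : 0 ≤ σ) (hout : ∀ j ∉ G, |f j (y - z)| ≤ σ) :
    q (y - qproj e f (B ∪ G) y) ≤ α ^ 2 * (1 + C) * q (y - z) + α * (α ^ #B * #B * c * σ) := by
  have hα : 0 ≤ α := zero_le_one.trans hq.one_le
  have hsplit : y - qproj e f (B ∪ G) y
      = (y - z - qproj e f G (y - z)) - qproj e f (B \ G) (y - z) := by
    have h : qproj e f (B ∪ G) y = qproj e f (B ∪ G) (y - z) + z := by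
      rw [qproj_sub, hz, sub_add_cancel]
    rw [h, union_comm, qproj_union_sdiff]
    abel
  calc q (y - qproj e f (B ∪ G) y)
      ≤ α * (q (y - z - qproj e f G (y - z)) + q (qproj e f (B \ G) (y - z))) :=
        hsplit ▸ hq.sub_le _ _
    _ ≤ α * (α * (1 + C) * q (y - z) + α ^ #B * #B * c * σ) := by
      gcongr
      · exact hC.sub_qproj_le hq hG hGn
      · exact hq.qproj_le hc he (card_le_card sdiff_subset) hσ
          fun i hi => hout i (Finset.mem_sdiff.1 hi).2
    _ = α ^ 2 * (1 + C) * q (y - z) + α * (α ^ #B * #B * c * σ) := by ring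

theorem GreedyProjBounded.sub_qproj_le_of_forall_abs_le (hC : GreedyProjBounded q e f t n C)
    (hq : IsQuasiSeminorm q α) (hbio : ∀ k i, f k (e i) = if k = i then 1 else 0)
    (hcoord : ∀ y, Tendsto (fun j => f j y) cofinite (𝓝 0)) {c : ℝ} (hc : 0 ≤ c)
    (he : ∀ i, q (e i) ≤ c) (ht1 : t ≤ 1) {x : X} {A : Finset ℕ} (hA : qGreedySet f t x A)
    (hAn : ∃ k, #A = n k) (B : Finset ℕ) {σ : ℝ} (hσ : 0 ≤ σ)
    (hout : ∀ j ∉ A, |f j x| ≤ σ) :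
    q (x - qproj e f A x)
      ≤ α ^ 2 * (1 + C) * q (x - qproj e f B x) + 2 * α ^ 2 * (α ^ #B * #B * c * σ) := by
  have hα : 0 ≤ α := zero_le_one.trans hq.one_le
  set v := x - qproj e f B x with hv
  obtain ⟨E, hEdisj, hEcard, hEdom⟩ :=
    exists_disjoint_card_eq_forall_abs_le (hcoord v) (A \ B) #(A ∩ B)
  have hG : qGreedySet f t v (A \ B ∪ E) := (hA.sdiff_sub_qproj hbio B).union ht1 hEdom
  have hGn : ∃ k, #(A \ B ∪ E) = n k := by
    rwa [card_union_of_disjoint hEdisj.symm, hEcard, card_sdiff_add_card_inter]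
  have hEσ : ∀ i ∈ E, |f i v| ≤ σ := by
    intro i hi
    rw [hv, map_sub, apply_qproj hbio]
    split_ifs with hiB
    · simpa using hσ
    · simpa using hout i fun hiA => disjoint_left.1 hEdisj hi (Finset.mem_sdiff.2 ⟨hiA, hiB⟩)
  have hsplit : x - qproj e f A x
      = (v - qproj e f (A \ B ∪ E) v) + (qproj e f E v + qproj e f (B \ A) x) := by
    have hAB : qproj e f A x + qproj e f (B \ A) x = qproj e f B x + qproj e f (A \ B) x := by
      rw [← qproj_union_sdiff, ← qproj_union_sdiff, union_comm]
    have hvx : qproj e f (A \ B) v = qproj e f (A \ B) x := qproj_congr fun i hi => by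
      simp [hv, apply_qproj hbio, (Finset.mem_sdiff.1 hi).2]
    rw [qproj_union hEdisj.symm, hvx, eq_sub_of_add_eq hAB, hv]
    abel
  rw [hsplit]
  calc _ ≤ α * (q (v - qproj e f (A \ B ∪ E) v)
          + α * (q (qproj e f E v) + q (qproj e f (B \ A) x))) :=
        (hq.add_le _ _).trans (by gcongr; exact hq.add_le _ _)
    _ ≤ α * (α * (1 + C) * q v
          + α * (α ^ #B * #B * c * σ + α ^ #B * #B * c * σ)) := by
      gcongr
      · exact hC.sub_qproj_le hq hG hGn
      · exact hq.qproj_le hc he (hEcard ▸ card_le_card inter_subset_right) hσ hEσ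
      · exact hq.qproj_le hc he (card_le_card sdiff_subset) hσ
          fun i hi => hout i (Finset.mem_sdiff.1 hi).2
    _ = _ := by ring

theorem GreedyProjBounded.exists_sub_qproj_le (hC : GreedyProjBounded q e f t n C) (hC0 : 0 ≤ C)
    (hq : IsQuasiSeminorm q α) (hbio : ∀ k i, f k (e i) = if k = i then 1 else 0)
    (hcoord : ∀ y, Tendsto (fun j => f j y) cofinite (𝓝 0))
    (hdense : ∀ x : X, ∀ ε : ℝ, 0 < ε → ∃ y ∈ Submodule.span ℝ (Set.range e), q (x - y) ≤ ε)
    {c : ℝ} (hc : 0 ≤ c) (he : ∀ i, q (e i) ≤ c) (ht0 : 0 < t) (ht1 : t ≤ 1)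
    (hn : StrictMono n) (y : X) {ε : ℝ} (hε : 0 < ε) :
    ∃ B : Finset ℕ, q (y - qproj e f B y) ≤ ε := by
  obtain ⟨δ, hδ, hδε⟩ := exists_pos_mul_lt (half_pos hε) (α ^ 2 * (1 + C))
  obtain ⟨z, hz, hyz⟩ := hdense y δ hδ
  obtain ⟨B, hB⟩ := exists_qproj_eq_self_of_mem_span hbio hz
  obtain ⟨σ, hσ, hσε⟩ := exists_pos_mul_lt (half_pos hε) (α * (α ^ #B * #B * c))
  obtain ⟨S, hS⟩ := exists_finset_abs_le_of_tendsto (hcoord (y - z)) (mul_pos ht0 hσ)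
  obtain ⟨G, -, hGcard, hGdom⟩ :=
    exists_disjoint_card_eq_forall_abs_le (hcoord (y - z)) ∅ (n (#S + 1))
  have hG : qGreedySet f t (y - z) G := by
    simpa using (show qGreedySet f t (y - z) ∅ by simp [qGreedySet]).union ht1 hGdom
  have hout := hG.abs_apply_le ht0 hS (hGcard ▸ hn.id_le (#S + 1))
  refine ⟨B ∪ G, (hC.sub_qproj_union_le hq hc he (hB _ subset_union_left) hG ⟨_, hGcard⟩
    hσ.le hout).trans ?_⟩
  have : α ^ 2 * (1 + C) * q (y - z) ≤ α ^ 2 * (1 + C) * δ := by gcongr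
  linarith

end Estimates

theorem stmt_12_general {X : Type*} [AddCommGroup X] [Module ℝ X]
    (q : X → ℝ) (α : ℝ) (hα : 1 ≤ α)
    (hq0 : ∀ x : X, 0 ≤ q x)
    (hqs : ∀ (a : ℝ) (x : X), q (a • x) = |a| * q x)
    (hqa : ∀ x y : X, q (x + y) ≤ α * (q x + q y))
    (e : ℕ → X) (f : ℕ → X →ₗ[ℝ] ℝ) (fn : ℕ → ℝ)
    (hfn0 : ∀ i, 0 ≤ fn i) (hfb : ∀ (i : ℕ) (x : X), |f i x| ≤ fn i * q x)
    (hbio : ∀ k i, f k (e i) = if k = i then 1 else 0)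
    (c : ℝ) (hc : ∀ i, (1 + q (e i)) * (1 + fn i) ≤ c)
    (hdense : ∀ x : X, ∀ ε : ℝ, 0 < ε →
      ∃ y ∈ Submodule.span ℝ (Set.range e), q (x - y) ≤ ε)
    (t : ℝ) (ht0 : 0 < t) (ht1 : t ≤ 1)
    (n : ℕ → ℕ) (hn : StrictMono n)
    (C₁ : ℝ) (hC₁ : 0 < C₁)
    (hqg : ∀ (x : X) (A : Finset ℕ), qGreedySet f t x A → (∃ k, A.card = n k) →
      q (qproj e f A x) ≤ C₁ * q x) :
    ∀ (x : X) (A : ℕ → Finset ℕ),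
      (∀ k, qGreedySet f t x (A k) ∧ (A k).card = n k) →
      ∀ ε : ℝ, 0 < ε → ∃ K, ∀ k ≥ K, q (x - qproj e f (A k) x) ≤ ε := by
  intro x A hA ε hε
  have hq : IsQuasiSeminorm q α := ⟨hq0, hqs, hqa, hα⟩
  have hC : GreedyProjBounded q e f t n C₁ := hqg
  have he : ∀ i, q (e i) ≤ c := fun i => by nlinarith [hc i, hq0 (e i), hfn0 i]
  have hfn : ∀ i, fn i ≤ c := fun i => by nlinarith [hc i, hq0 (e i), hfn0 i]
  have hc0 : 0 ≤ c := (hq0 _).trans (he 0)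
  have hf : ∀ i x, |f i x| ≤ c * q x := fun i x =>
    (hfb i x).trans (mul_le_mul_of_nonneg_right (hfn i) (hq0 x))
  have hcoord := tendsto_apply_cofinite hbio hc0 hf hdense
  obtain ⟨δ, hδ, hδε⟩ := exists_pos_mul_lt (half_pos hε) (α ^ 2 * (1 + C₁))
  obtain ⟨B, hB⟩ :=
    hC.exists_sub_qproj_le hC₁.le hq hbio hcoord hdense hc0 he ht0 ht1 hn x hδ
  obtain ⟨σ, hσ, hσε⟩ := exists_pos_mul_lt (half_pos hε) (2 * α ^ 2 * (α ^ #B * #B * c))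
  obtain ⟨S, hS⟩ := exists_finset_abs_le_of_tendsto (hcoord x) (mul_pos ht0 hσ)
  refine ⟨#S + 1, fun k hk => ?_⟩
  have hout := (hA k).1.abs_apply_le ht0 hS ((hA k).2 ▸ hk.trans (hn.id_le k))
  have hbound := hC.sub_qproj_le_of_forall_abs_le hq hbio hcoord hc0 he ht1 (hA k).1
    ⟨k, (hA k).2⟩ B hσ.le hout
  have : α ^ 2 * (1 + C₁) * q (x - qproj e f B x) ≤ α ^ 2 * (1 + C₁) * δ := by gcongr
  linarith

/-- If the `t`-greedy projections of cardinality in `n` are uniformly bounded,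
then every sequence of `t`-greedy sums of orders `n_k` of any `x` converges
to `x`. -/
theorem stmt_12 {X : Type*} [AddCommGroup X] [Module ℝ X]
    (q : X → ℝ) (α : ℝ) (hα : 1 ≤ α)
    (hq0 : ∀ x : X, 0 ≤ q x) (hqz : ∀ x : X, q x = 0 ↔ x = 0)
    (hqs : ∀ (a : ℝ) (x : X), q (a • x) = |a| * q x)
    (hqa : ∀ x y : X, q (x + y) ≤ α * (q x + q y))
    (hcomplete : ∀ u : ℕ → X,
      (∀ ε : ℝ, 0 < ε → ∃ N, ∀ p ≥ N, ∀ r ≥ N, q (u p - u r) ≤ ε) →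
      ∃ x : X, ∀ ε : ℝ, 0 < ε → ∃ N, ∀ p ≥ N, q (u p - x) ≤ ε)
    (e : ℕ → X) (f : ℕ → X →ₗ[ℝ] ℝ) (fn : ℕ → ℝ)
    (hfn0 : ∀ i, 0 ≤ fn i) (hfb : ∀ (i : ℕ) (x : X), |f i x| ≤ fn i * q x)
    (hbio : ∀ k i, f k (e i) = if k = i then 1 else 0)
    (c : ℝ) (hc : ∀ i, (1 + q (e i)) * (1 + fn i) ≤ c)
    (hdense : ∀ x : X, ∀ ε : ℝ, 0 < ε →
      ∃ y ∈ Submodule.span ℝ (Set.range e), q (x - y) ≤ ε)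
    (t : ℝ) (ht0 : 0 < t) (ht1 : t ≤ 1)
    (n : ℕ → ℕ) (hn : StrictMono n) (hnpos : ∀ k, 0 < n k)
    (C₁ : ℝ) (hC₁ : 0 < C₁)
    (hqg : ∀ (x : X) (A : Finset ℕ), qGreedySet f t x A → (∃ k, A.card = n k) →
      q (qproj e f A x) ≤ C₁ * q x) :
    ∀ (x : X) (A : ℕ → Finset ℕ),
      (∀ k, qGreedySet f t x (A k) ∧ (A k).card = n k) →
      ∀ ε : ℝ, 0 < ε → ∃ K, ∀ k ≥ K, q (x - qproj e f (A k) x) ≤ ε :=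
  stmt_12_general q α hα hq0 hqs hqa e f fn hfn0 hfb hbio c hc hdense t ht0 ht1 n hn C₁ hC₁ hqg
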